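/- arXiv:1908.03087 — 3 statements merged into one kernel-verified Lean document; each statement's English description precedes it below -/
import Mathlib

section
/- Let n ≥ 1 and k ≥ 0 with k ≤ n, let w₀, …, w_k be k+1 affinely independent points of the Euclidean space ℝⁿ, and let Γ = convexHull{w₀, …, w_k} be the k-simplex they span. Then for every affine map u : ℝⁿ → ℝ, the integral of u over Γ with respect to the k-dimensional Hausdorff measure equals the measure of Γ times the arithmetic mean of the vertex values: ∫_Γ u dμH[k] = μH[k](Γ) · (1/(k+1)) · ∑_{i=0}^{k} u(wᵢ). In particular, the integral over a cell face of the arithmetic mean of the nodal (vertex) values of a piecewise-linear function equals the integral of the function itself over that face (Lemma 1 of the paper). -/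
/-!
Writing `u = ∑ᵢ u(wᵢ) λᵢ` in barycentric coordinates, it suffices that all the `λᵢ` have the same
integral over the simplex, since they sum to `1`. The affine span of the `wᵢ` is isometric to a
`k`-dimensional normed space, on which `μH[k]` is a Haar measure. There the affine map exchanging
`wᵢ` and `wⱼ` and fixing the other vertices is an involution, so its linear part has determinant
`±1`; hence it preserves the Haar measure, it maps the simplex onto itself, and it turns `λᵢ`
into `λⱼ`.
-/

open MeasureTheory Set Module Function

theorem AffineMap.linear_involutive {k V : Type*} [Ring k] [AddCommGroup V] [Module k V]
    {T : V →ᵃ[k] V} (hT : Involutive T) : Involutive T.linear := fun v => by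
  have hlin (x : V) : T.linear x = T x - T 0 := congrFun T.decomp' x
  rw [hlin v, map_sub, hlin, hlin, hT, hT]
  abel

theorem LinearMap.abs_det_eq_one_of_involutive {R M : Type*} [CommRing R] [LinearOrder R]
    [IsStrictOrderedRing R] [AddCommGroup M] [Module R M] {f : M →ₗ[R] M} (hf : Involutive f) :
    |LinearMap.det f| = 1 := by
  have hsq : LinearMap.det f * LinearMap.det f = 1 := by
    rw [← LinearMap.det_comp, show f ∘ₗ f = LinearMap.id from LinearMap.ext hf, LinearMap.det_id]
  have habs : |LinearMap.det f| * |LinearMap.det f| = 1 := by rw [← abs_mul, hsq, abs_one]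
  exact (mul_self_eq_one_iff.1 habs).resolve_right (by linarith [abs_nonneg (LinearMap.det f)])

theorem AffineMap.measurePreserving_of_involutive {V : Type*} [NormedAddCommGroup V]
    [NormedSpace ℝ V] [FiniteDimensional ℝ V] [MeasurableSpace V] [BorelSpace V]
    (μ : Measure V) [μ.IsAddHaarMeasure] {T : V →ᵃ[ℝ] V} (hT : Involutive T) :
    MeasurePreserving T μ μ := by
  have hdet := LinearMap.abs_det_eq_one_of_involutive (AffineMap.linear_involutive hT)
  refine ⟨T.continuous_of_finiteDimensional.measurable, ?_⟩
  have hT' : ⇑T = (· + T 0) ∘ T.linear := T.decomp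
  rw [hT', ← Measure.map_map (measurable_add_const _)
    T.linear.continuous_of_finiteDimensional.measurable,
    Measure.map_linearMap_addHaar_eq_smul_addHaar μ (by simp [← abs_pos, hdet]),
    abs_inv, hdet, inv_one, ENNReal.ofReal_one, one_smul, map_add_right_eq_self]

namespace AffineBasis

variable {ι k V P : Type*} [Fintype ι] [Ring k] [AddCommGroup V] [Module k V] [AddTorsor V P]

theorem affineMap_apply_eq_sum {V₂ : Type*} [AddCommGroup V₂] [Module k V₂]
    (b : AffineBasis ι k P) (f : P →ᵃ[k] V₂) (q : P) :
    f q = ∑ i, b.coord i q • f (b i) := by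
  have hq := b.sum_coord_apply_eq_one q
  conv_lhs => rw [← b.affineCombination_coord_eq_self q]
  rw [Finset.map_affineCombination _ _ _ hq,
    Finset.univ.affineCombination_eq_linear_combination _ _ hq]
  rfl

variable (b : AffineBasis ι k V) (σ : Equiv.Perm ι)

noncomputable def permAffineMap : V →ᵃ[k] V :=
  (Fintype.linearCombination k (b ∘ σ)).toAffineMap.comp b.coords

theorem permAffineMap_apply (x : V) :
    b.permAffineMap σ x = ∑ i, b.coord i x • b (σ i) :=
  Fintype.linearCombination_apply _ _ _

theorem permAffineMap_apply_basis (i : ι) : b.permAffineMap σ (b i) = b (σ i) := by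
  classical
  simp [permAffineMap_apply, coord_apply, ite_smul]

theorem coord_permAffineMap (i : ι) (x : V) :
    b.coord i (b.permAffineMap σ x) = b.coord (σ.symm i) x := by
  classical
  rw [← AffineMap.comp_apply, affineMap_apply_eq_sum b, Fintype.sum_eq_single (σ.symm i)]
  · simp [permAffineMap_apply_basis]
  · intro j hj
    rw [AffineMap.comp_apply, permAffineMap_apply_basis, b.coord_apply_ne, smul_zero]
    rintro rfl
    simp at hj

theorem permAffineMap_involutive (hσ : Involutive σ) : Involutive (b.permAffineMap σ) :=
  fun x => b.ext_elem fun i => by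
    rw [coord_permAffineMap, coord_permAffineMap]
    congr 2
    rw [Equiv.symm_apply_eq, Equiv.symm_apply_eq, hσ]

end AffineBasis

theorem AffineBasis.image_permAffineMap_convexHull {ι V : Type*} [Fintype ι] [AddCommGroup V]
    [Module ℝ V] (b : AffineBasis ι ℝ V) (σ : Equiv.Perm ι) :
    b.permAffineMap σ '' convexHull ℝ (range b) = convexHull ℝ (range b) := by
  rw [AffineMap.image_convexHull, ← range_comp,
    show b.permAffineMap σ ∘ b = b ∘ σ from funext (b.permAffineMap_apply_basis σ),
    range_comp, σ.range_eq_univ, image_univ]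

namespace AffineBasis

variable {ι V : Type*} [Fintype ι] [NormedAddCommGroup V] [NormedSpace ℝ V]
  [FiniteDimensional ℝ V] [MeasurableSpace V] [BorelSpace V] (μ : Measure V)
  [μ.IsAddHaarMeasure] (b : AffineBasis ι ℝ V)

theorem integrableOn_coord_convexHull (i : ι) :
    IntegrableOn (b.coord i) (convexHull ℝ (range b)) μ :=
  (b.coord i).continuous_of_finiteDimensional.continuousOn.integrableOn_compact
    ((finite_range b).isCompact_convexHull ℝ)

theorem setIntegral_coord_convexHull_eq (i j : ι) :
    ∫ x in convexHull ℝ (range b), b.coord i x ∂μ =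
      ∫ x in convexHull ℝ (range b), b.coord j x ∂μ := by
  classical
  set T := b.permAffineMap (Equiv.swap i j)
  have hT : Involutive T := b.permAffineMap_involutive _ (Equiv.swap_apply_self i j)
  have hΓ : T ⁻¹' convexHull ℝ (range b) = convexHull ℝ (range b) := by
    rw [← hT.image_eq_preimage_symm, b.image_permAffineMap_convexHull]
  have hT_emb : MeasurableEmbedding T :=
    (MeasurableEquiv.ofInvolutive T hT
      T.continuous_of_finiteDimensional.measurable).measurableEmbedding
  calc ∫ x in convexHull ℝ (range b), b.coord i x ∂μ
      = ∫ x in T ⁻¹' convexHull ℝ (range b), b.coord i (T x) ∂μ :=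
        ((T.measurePreserving_of_involutive μ hT).setIntegral_preimage_emb hT_emb _ _).symm
    _ = ∫ x in convexHull ℝ (range b), b.coord j x ∂μ := by
        rw [hΓ]
        simp only [T, coord_permAffineMap, Equiv.symm_swap, Equiv.swap_apply_left]

theorem setIntegral_coord_convexHull (i : ι) :
    ∫ x in convexHull ℝ (range b), b.coord i x ∂μ =
      (μ (convexHull ℝ (range b))).toReal / Fintype.card ι := by
  have hsum : ∑ j, ∫ x in convexHull ℝ (range b), b.coord j x ∂μ =
      (μ (convexHull ℝ (range b))).toReal := by
    rw [← integral_finsetSum _ fun j _ => b.integrableOn_coord_convexHull μ j]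
    simp [sum_coord_apply_eq_one, Measure.real]
  have := b.nonempty
  rw [← hsum, Fintype.sum_congr _ _ fun j => b.setIntegral_coord_convexHull_eq μ j i]
  have : (Fintype.card ι : ℝ) ≠ 0 := Nat.cast_ne_zero.2 Fintype.card_ne_zero
  simp [field]

theorem setIntegral_affineMap_convexHull (u : V →ᵃ[ℝ] ℝ) :
    ∫ x in convexHull ℝ (range b), u x ∂μ =
      (μ (convexHull ℝ (range b))).toReal * ((1 / Fintype.card ι) * ∑ i, u (b i)) := by
  calc ∫ x in convexHull ℝ (range b), u x ∂μ
      = ∫ x in convexHull ℝ (range b), ∑ i, b.coord i x * u (b i) ∂μ :=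
        integral_congr_ae (ae_of_all _ (b.affineMap_apply_eq_sum u))
    _ = ∑ i, (∫ x in convexHull ℝ (range b), b.coord i x ∂μ) * u (b i) := by
        rw [integral_finsetSum _ fun i _ => (b.integrableOn_coord_convexHull μ i).mul_const _]
        simp_rw [integral_mul_const]
    _ = _ := by
        simp_rw [setIntegral_coord_convexHull, div_mul_eq_mul_div, ← Finset.sum_div,
          ← Finset.mul_sum]
        ring

end AffineBasis

theorem Isometry.setIntegral_image_hausdorffMeasure {X Y E : Type*} [EMetricSpace X]
    [CompleteSpace X] [MeasurableSpace X] [BorelSpace X] [EMetricSpace Y] [MeasurableSpace Y]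
    [BorelSpace Y] [NormedAddCommGroup E] [NormedSpace ℝ E] {f : X → Y} (hf : Isometry f)
    {d : ℝ} (hd : 0 ≤ d) (s : Set X) (g : Y → E) :
    ∫ y in f '' s, g y ∂μH[d] = ∫ x in s, g (f x) ∂μH[d] := by
  have hmp : MeasurePreserving f μH[d] (μH[d].restrict (range f)) :=
    ⟨hf.continuous.measurable, hf.map_hausdorffMeasure (Or.inl hd)⟩
  rw [← hmp.setIntegral_image_emb hf.isClosedEmbedding.measurableEmbedding,
    Measure.restrict_restrict_of_subset (image_subset_range f s)]

theorem AffineIndependent.exists_affineBasis_vectorSpan {ι E : Type*} [Fintype ι]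
    [NormedAddCommGroup E] [NormedSpace ℝ E] {w : ι → E} (hw : AffineIndependent ℝ w) (i₀ : ι) :
    ∃ (Φ : vectorSpan ℝ (range w) →ᵃⁱ[ℝ] E) (b : AffineBasis ι ℝ (vectorSpan ℝ (range w))),
      ⇑Φ ∘ ⇑b = w := by
  let Φ : vectorSpan ℝ (range w) →ᵃⁱ[ℝ] E :=
    (AffineIsometryEquiv.constVAdd ℝ E (w i₀)).toAffineIsometry.comp
      (vectorSpan ℝ (range w)).subtypeₗᵢ.toAffineIsometry
  let p : ι → vectorSpan ℝ (range w) := fun i =>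
    ⟨w i -ᵥ w i₀, vsub_mem_vectorSpan ℝ (mem_range_self i) (mem_range_self i₀)⟩
  have hΦp : ⇑Φ ∘ p = w := funext fun i => add_sub_cancel (w i₀) (w i)
  have hp : AffineIndependent ℝ p :=
    AffineIndependent.of_comp Φ.toAffineMap <| by
      rw [show ⇑Φ.toAffineMap ∘ p = w from hΦp]
      exact hw
  have hcard : Fintype.card ι = Fintype.card ι - 1 + 1 := by
    have := Fintype.card_pos_iff.2 ⟨i₀⟩
    omega
  refine ⟨Φ, ⟨p, hp, ?_⟩, hΦp⟩
  rw [hp.affineSpan_eq_top_iff_card_eq_finrank_add_one, hw.finrank_vectorSpan hcard]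
  exact hcard

theorem integral_affineMap_simplex_eq_measure_mul_mean_general
    (n k : ℕ)
    (w : Fin (k + 1) → EuclideanSpace ℝ (Fin n))
    (hw : AffineIndependent ℝ w)
    (u : EuclideanSpace ℝ (Fin n) →ᵃ[ℝ] ℝ) :
    ∫ x in convexHull ℝ (Set.range w), u x ∂(μH[(k : ℝ)]) =
      (μH[(k : ℝ)] (convexHull ℝ (Set.range w))).toReal *
        ((1 / (k + 1 : ℝ)) * ∑ i, u (w i)) := by
  obtain ⟨Φ, b, hΦb⟩ := hw.exists_affineBasis_vectorSpan 0
  have hdim : finrank ℝ (vectorSpan ℝ (range w)) = k := hw.finrank_vectorSpan (Fintype.card_fin _)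
  have : (μH[(k : ℝ)] : Measure (vectorSpan ℝ (range w))).IsAddHaarMeasure := by
    have := isAddHaarMeasure_hausdorffMeasure (E := vectorSpan ℝ (range w))
    rwa [hdim] at this
  have hΓ : Φ '' convexHull ℝ (range b) = convexHull ℝ (range w) := by
    rw [← Φ.coe_toAffineMap, AffineMap.image_convexHull, ← range_comp,
      show ⇑Φ.toAffineMap ∘ ⇑b = w from hΦb]
  rw [← hΓ, Φ.isometry.setIntegral_image_hausdorffMeasure k.cast_nonneg,
    Φ.isometry.hausdorffMeasure_image (Or.inl k.cast_nonneg)]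
  refine (b.setIntegral_affineMap_convexHull _ (u.comp Φ.toAffineMap)).trans ?_
  simp [← hΦb]

/-- Lemma 1 (general form): the integral of an affine map over a `k`-simplex
spanned by `k+1` affinely independent points of `ℝⁿ`, with respect to the
`k`-dimensional Hausdorff measure, equals the measure of the simplex times the
arithmetic mean of the vertex values. -/
theorem integral_affineMap_simplex_eq_measure_mul_mean
    (n k : ℕ) (hn : 1 ≤ n) (hk : k ≤ n)
    (w : Fin (k + 1) → EuclideanSpace ℝ (Fin n))
    (hw : AffineIndependent ℝ w)
    (u : EuclideanSpace ℝ (Fin n) →ᵃ[ℝ] ℝ) :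
    ∫ x in convexHull ℝ (Set.range w), u x ∂(μH[(k : ℝ)]) =
      (μH[(k : ℝ)] (convexHull ℝ (Set.range w))).toReal *
        ((1 / (k + 1 : ℝ)) * ∑ i, u (w i)) :=
  integral_affineMap_simplex_eq_measure_mul_mean_general n k w hw u
end

section
/- Let a, b, c be three affinely independent points of ℝ² (the vertices of a nondegenerate triangle), and let N_a, N_c : ℝ² → ℝ be the associated linear shape functions (barycentric coordinates), i.e. the unique affine maps satisfying N_a(a) = 1, N_a(b) = N_a(c) = 0 and N_c(c) = 1, N_c(a) = N_c(b) = 0. Then the integrals of the shape functions over the edge [a, b] with respect to the 1-dimensional Hausdorff measure are ∫_{[a,b]} N_a dμH[1] = dist(a,b)/2 and ∫_{[a,b]} N_c dμH[1] = 0; that is, ∫_{Γ} N_l dΓ = (1/n_fn) |Γ| χ_{F}(l), where n_fn = 2 is the number of nodes of the edge and χ_F(l) equals 1 if node l belongs to the edge and 0 otherwise. -/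
open MeasureTheory Set

lemma restrict_segment_eq_map (a b : EuclideanSpace ℝ (Fin 2)) :
    μH[(1:ℝ)].restrict (segment ℝ a b) =
      Measure.map (AffineMap.lineMap a b)
        ((nndist a b) • volume.restrict (Icc (0:ℝ) 1)) := by
  have hf : Continuous (AffineMap.lineMap a b : ℝ →ᵃ[ℝ] _) :=
    AffineMap.lineMap_continuous
  ext A hA
  rw [Measure.restrict_apply hA, Measure.map_apply hf.measurable hA,
    Measure.smul_apply, Measure.restrict_apply (hA.preimage hf.measurable),
    segment_eq_image_lineMap, Set.inter_comm A, ← Set.image_inter_preimage, Set.inter_comm _ (Icc (0:ℝ) 1),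
    hausdorffMeasure_lineMap_image, hausdorffMeasure_real]

lemma integral_affine_over_segment (a b : EuclideanSpace ℝ (Fin 2))
    (N : EuclideanSpace ℝ (Fin 2) →ᵃ[ℝ] ℝ) :
    ∫ x in segment ℝ a b, N x ∂(μH[(1:ℝ)]) = dist a b * (N a + N b) / 2 := by
  rw [restrict_segment_eq_map a b,
    integral_map (AffineMap.lineMap_continuous).measurable.aemeasurable
      (N.continuous_of_finiteDimensional.aestronglyMeasurable)]
  simp only [N.apply_lineMap]
  rw [integral_smul_nnreal_measure]
  have : ∀ t : ℝ, (AffineMap.lineMap (N a) (N b) t : ℝ) = N a + t * (N b - N a) := by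
    intro t; simp [AffineMap.lineMap_apply, smul_eq_mul]; ring
  simp only [this]
  rw [integral_Icc_eq_integral_Ioc, ← intervalIntegral.integral_of_le zero_le_one]
  have : ∫ t in (0:ℝ)..1, (N a + t * (N b - N a)) = (N a + N b) / 2 := by
    rw [intervalIntegral.integral_add intervalIntegrable_const ((continuous_mul_right _).intervalIntegrable _ _)]
    simp [intervalIntegral.integral_mul_const, integral_id]
    ring
  rw [this]
  simp [NNReal.smul_def, nndist_dist, smul_eq_mul, mul_div_assoc,
    Real.coe_toNNReal _ dist_nonneg]

/-- Integrals of the linear shape functions (barycentric coordinates) of a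
nondegenerate triangle in the plane over the edge `[a,b]`, with respect to the
1-dimensional Hausdorff measure: `∫_{[a,b]} N_a = dist a b / 2` and
`∫_{[a,b]} N_c = 0`. -/
theorem integral_shapeFunctions_over_edge
    (a b c : EuclideanSpace ℝ (Fin 2))
    (habc : AffineIndependent ℝ ![a, b, c])
    (Na Nc : EuclideanSpace ℝ (Fin 2) →ᵃ[ℝ] ℝ)
    (hNaa : Na a = 1) (hNab : Na b = 0) (hNac : Na c = 0)
    (hNcc : Nc c = 1) (hNca : Nc a = 0) (hNcb : Nc b = 0) :
    (∫ x in segment ℝ a b, Na x ∂(μH[(1 : ℝ)]) = dist a b / 2) ∧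
      (∫ x in segment ℝ a b, Nc x ∂(μH[(1 : ℝ)]) = 0) := by
  constructor
  · rw [integral_affine_over_segment, hNaa, hNab]; ring
  · rw [integral_affine_over_segment, hNca, hNcb]; ring
end

section
/- Let n ≥ 2, let c : Fin n → ℝ satisfy c_k > 0 for every k, and for each k let v_k ∈ ℝⁿ be the 0/1-vector with (v_k)_i = 1 if i ≠ k and (v_k)_k = 0. Then the symmetric n × n real matrix M = ∑_{k} c_k · v_k v_kᵀ, i.e. M_{ij} = ∑_k c_k · [i ≠ k] · [j ≠ k], is positive definite; in particular it is invertible. This establishes the invertibility of the local FCFV matrix m_e (whose entries are (m_e)_{IJ} = ∑_k (τ_k |Γ_{e,k}| / n_fn²) χ_{F_{e,k}}(I) χ_{F_{e,k}}(J), with positive stabilisation parameters τ_k and positive face measures |Γ_{e,k}|, and where each face of a triangle or tetrahedron contains exactly the nodes different from the opposite vertex), which is required for the explicit local solve u_e = m_e⁻¹ b_e + m_e⁻¹ ∑_j τ_j r_j û_j of the second-order FCFV method. -/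
/-! With `V = J - I` the matrix with entries `V k i = [i ≠ k]`, the local matrix factors as
`M = Vᵀ diag(c) V`, so `xᵀ M x = ∑ k, c k (∑ i, x i - x k)²`. The diagonal factor is positive
definite, and `V` is injective unless `n = 1`: if `V x = 0` then every `x k` equals `S = ∑ i, x i`,
whence `S = n S` and `S = 0`. -/

namespace Matrix

variable {ι R : Type*} [Fintype ι] [DecidableEq ι]

def offDiagOnes (ι R : Type*) [DecidableEq ι] [Zero R] [One R] : Matrix ι ι R :=
  of fun k i => if i ≠ k then 1 else 0

theorem offDiagOnes_mulVec_apply [CommRing R] (x : ι → R) (k : ι) :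
    (offDiagOnes ι R *ᵥ x) k = ∑ i, x i - x k := by
  simp [offDiagOnes, mulVec, dotProduct, ite_not, Finset.sum_ite, Finset.filter_ne']

theorem offDiagOnes_mulVec_injective [CommRing R] [NoZeroDivisors R]
    (hcard : (Fintype.card ι : R) ≠ 1) : Function.Injective (offDiagOnes ι R).mulVec := by
  rw [← coe_mulVecLin, injective_iff_map_eq_zero]
  intro x hx
  have hconst : ∀ k, x k = ∑ i, x i := fun k => by
    simpa [offDiagOnes_mulVec_apply, sub_eq_zero, eq_comm] using congrFun hx k
  have hsum : ((Fintype.card ι : R) - 1) * ∑ i, x i = 0 := by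
    have : ∑ i, x i = Fintype.card ι * ∑ i, x i := by
      conv_lhs => rw [Finset.sum_congr rfl fun i _ => hconst i]
      simp
    linear_combination -this
  have hzero : ∑ i, x i = 0 := (mul_eq_zero.1 hsum).resolve_left (sub_ne_zero.2 hcard)
  exact funext fun k => (hconst k).trans hzero

theorem transpose_offDiagOnes_mul_diagonal_mul_offDiagOnes [CommSemiring R] (c : ι → R) :
    (offDiagOnes ι R)ᵀ * diagonal c * offDiagOnes ι R =
      of fun i j => ∑ k, c k * (if i ≠ k then 1 else 0) * (if j ≠ k then 1 else 0) := by
  ext i j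
  simp only [mul_apply (M := _ * diagonal c), mul_diagonal, transpose_apply, offDiagOnes, of_apply]
  exact Finset.sum_congr rfl fun k _ => by ring

end Matrix

open Matrix

/-- Positive definiteness (hence invertibility) of the local FCFV matrix:
for positive coefficients `c k`, the matrix
`M i j = ∑ k, c k * [i ≠ k] * [j ≠ k]` is positive definite and invertible. -/
theorem fcfv_local_matrix_posDef
    (n : ℕ) (hn : 2 ≤ n) (c : Fin n → ℝ) (hc : ∀ k, 0 < c k) :
    (Matrix.PosDef (fun i j =>
        ∑ k, c k * (if i ≠ k then (1 : ℝ) else 0) * (if j ≠ k then 1 else 0) :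
      Matrix (Fin n) (Fin n) ℝ)) ∧
    IsUnit (Matrix.det (fun i j =>
        ∑ k, c k * (if i ≠ k then (1 : ℝ) else 0) * (if j ≠ k then 1 else 0) :
      Matrix (Fin n) (Fin n) ℝ)) := by
  have hcard : (Fintype.card (Fin n) : ℝ) ≠ 1 := by
    rw [Fintype.card_fin]; exact_mod_cast (by omega : n ≠ 1)
  have hPD : (offDiagOnes (Fin n) ℝ)ᴴ * diagonal c * offDiagOnes (Fin n) ℝ |>.PosDef :=
    (posDef_diagonal_iff.2 hc).conjTranspose_mul_mul_same (offDiagOnes_mulVec_injective hcard)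
  rw [conjTranspose_eq_transpose_of_trivial,
    transpose_offDiagOnes_mul_diagonal_mul_offDiagOnes] at hPD
  exact ⟨hPD, (isUnit_iff_isUnit_det _).1 hPD.isUnit⟩
end
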